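/- Let F be a Euclidean Coxeter simplex with special vertex V, and let P ⊇ F be the fundamental chamber of a finite-index reflection subgroup G_P ⊆ G_F containing V as a special vertex. Let V₁, ..., V_k be the points of the G_F-orbit of V lying in P, and for each i let G_{P(i)} be the group generated by reflections in the facets of P containing V_i. Then [G_F : G_P] = Σᵢ |G'_F| / |G_{P(i)}|, where G'_F is the stabilizer of V in G_F; consequently [G_F : G_P] / [G'_F : G'_P] = Σᵢ [G'_P : G_{P(i)}] is a positive integer, i.e., [G'_F : G'_P] divides [G_F : G_P]. -/

import Mathlib

open scoped RealInnerProductSpace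

noncomputable section

/-- Euclidean `n`-space. -/
abbrev Euc (n : ℕ) := EuclideanSpace ℝ (Fin n)

/-- The group of isometries of Euclidean `n`-space. -/
abbrev Isom (n : ℕ) := Euc n ≃ᵢ Euc n

/-- The affine reflection of `ℝⁿ` in the hyperplane `{x | ⟪u, x⟫ = c}`. -/
def reflAff {n : ℕ} (u : Euc n) (c : ℝ) : Isom n :=
  (IsometryEquiv.addLeft (-((c / ⟪u, u⟫) • u))).trans
    (((Submodule.reflection ((ℝ ∙ u)ᗮ)).toIsometryEquiv).trans
      (IsometryEquiv.addLeft ((c / ⟪u, u⟫) • u)))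

/-- `g` is a reflection (in some affine hyperplane). -/
def IsReflIso {n : ℕ} (g : Isom n) : Prop :=
  ∃ u c, u ≠ (0 : Euc n) ∧ g = reflAff u c

/-- `H` is a reflection subgroup of `G`: generated by reflections belonging to `G`. -/
def IsReflSubgroupOf {n : ℕ} (H G : Subgroup (Isom n)) : Prop :=
  ∃ R, (∀ g ∈ R, IsReflIso g) ∧ R ⊆ (G : Set (Isom n)) ∧ H = Subgroup.closure R

/-- `F` is a fundamental domain for the group `G`: its images cover the space and the
images of its interior are pairwise disjoint. -/
def IsFundDom {n : ℕ} (G : Subgroup (Isom n)) (F : Set (Euc n)) : Prop :=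
  (∀ x, ∃ g ∈ G, x ∈ (g : Isom n) '' F) ∧
    ∀ g ∈ G, g ≠ (1 : Isom n) → Disjoint (interior F) ((g : Isom n) '' interior F)

/-- The (generalized) polyhedron cut out by the half-spaces `⟪u i, x⟫ ≤ c i`. -/
def simplexSet {n m : ℕ} (u : Fin m → Euc n) (c : Fin m → ℝ) : Set (Euc n) :=
  {x | ∀ i, ⟪u i, x⟫ ≤ c i}

/-- The group generated by the reflections in the facets of `simplexSet u c`. -/
def chamberGroup {n m : ℕ} (u : Fin m → Euc n) (c : Fin m → ℝ) : Subgroup (Isom n) :=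
  Subgroup.closure (Set.range fun i => reflAff (u i) (c i))

/-- The stabilizer of the point `V` in the subgroup `G`. -/
def stabAt {n : ℕ} (G : Subgroup (Isom n)) (V : Euc n) : Subgroup (Isom n) where
  carrier := {g | g ∈ G ∧ g V = V}
  one_mem' := ⟨G.one_mem, rfl⟩
  mul_mem' := by
    rintro a b ⟨ha, ha'⟩ ⟨hb, hb'⟩
    exact ⟨G.mul_mem ha hb, by rw [IsometryEquiv.mul_apply, hb', ha']⟩
  inv_mem' := by
    rintro a ⟨ha, ha'⟩
    refine ⟨G.inv_mem ha, ?_⟩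
    conv_lhs => rw [← ha']
    exact a.inv_apply_self V

/-- `V` is a special point of the reflection group `H`: for every mirror of `H`, the
parallel hyperplane through `V` is again a mirror of `H`. -/
def IsSpecialPt {n : ℕ} (H : Subgroup (Isom n)) (V : Euc n) : Prop :=
  ∀ u c, u ≠ (0 : Euc n) → reflAff u c ∈ H → reflAff u ⟪u, V⟫ ∈ H

variable {n : ℕ}

lemma inner_self_ne {u : Euc n} (hu : u ≠ 0) : ⟪u, u⟫ ≠ 0 :=
  fun h => hu (inner_self_eq_zero.mp h)

lemma reflAff_apply (u : Euc n) (c : ℝ) (x : Euc n) (hu : u ≠ 0) :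
    reflAff u c x = x - ((2 * (⟪u, x⟫ - c)) / ⟪u, u⟫) • u := by
  have hne : ⟪u, u⟫ ≠ 0 := inner_self_ne hu
  have h0 : reflAff u c x =
      ((c / ⟪u, u⟫) • u) + ((Submodule.reflection ((ℝ ∙ u)ᗮ)) ((-((c / ⟪u, u⟫) • u)) + x)) := rfl
  rw [h0, Submodule.reflection_apply]
  rw [Submodule.starProjection_orthogonal_val, Submodule.starProjection_singleton]
  have hnorm : (‖u‖ : ℝ) ^ 2 = ⟪u, u⟫ := (real_inner_self_eq_norm_sq u).symm
  simp only [RCLike.ofReal_real_eq_id, id_eq]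
  rw [hnorm]
  rw [inner_add_right, inner_neg_right, inner_smul_right, real_inner_self_eq_norm_sq, hnorm,
    div_mul_cancel₀ c hne]
  module

lemma reflAff_fix {u : Euc n} {c : ℝ} {x : Euc n} (hu : u ≠ 0) (h : ⟪u, x⟫ = c) :
    reflAff u c x = x := by
  rw [reflAff_apply u c x hu, h]; simp

lemma reflAff_ne_one {u : Euc n} (c : ℝ) (hu : u ≠ 0) : reflAff u c ≠ 1 := by
  intro h
  have hne : ⟪u, u⟫ ≠ 0 := inner_self_ne hu
  have hx : reflAff u c ((c / ⟪u, u⟫) • u + u) = ((c / ⟪u, u⟫) • u + u) := by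
    rw [h]; rfl
  rw [reflAff_apply _ _ _ hu] at hx
  rw [inner_add_right, inner_smul_right] at hx
  rw [div_mul_cancel₀ c hne] at hx
  have h2 : ((2 * (c + ⟪u, u⟫ - c)) / ⟪u, u⟫) • u = 0 := sub_eq_self.mp hx
  have h3 : (2 * (c + ⟪u, u⟫ - c)) / ⟪u, u⟫ = 2 := by
    rw [add_sub_cancel_left, mul_div_assoc, div_self hne, mul_one]
  rw [h3] at h2
  rcases smul_eq_zero.mp h2 with h4 | h4
  · norm_num at h4
  · exact hu h4

lemma reflAff_mem_refl {u : Euc n} {c : ℝ} (hu : u ≠ 0) {x : Euc n} (hx : reflAff u c x = x) :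
    ⟪u, x⟫ = c := by
  rw [reflAff_apply _ _ _ hu] at hx
  have h2 : ((2 * (⟪u, x⟫ - c)) / ⟪u, u⟫) • u = 0 := sub_eq_self.mp hx
  rcases smul_eq_zero.mp h2 with h4 | h4
  · rcases div_eq_zero_iff.mp h4 with h5 | h5
    · linarith
    · exact absurd h5 (inner_self_ne hu)
  · exact absurd h4 hu

lemma reflAff_dist_lt {u : Euc n} {c : ℝ} (hu : u ≠ 0) {z b : Euc n}
    (hz : ⟪u, z⟫ < c) (hb : c < ⟪u, b⟫) : dist (reflAff u c b) z < dist b z := by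
  have hne : ⟪u, u⟫ ≠ 0 := inner_self_ne hu
  have hpos : (0:ℝ) < ⟪u, u⟫ := lt_of_le_of_ne real_inner_self_nonneg (Ne.symm hne)
  set t : ℝ := (2 * (⟪u, b⟫ - c)) / ⟪u, u⟫ with ht
  have htpos : 0 < t := by
    apply div_pos _ hpos; linarith
  have happ : reflAff u c b = b - t • u := reflAff_apply u c b hu
  have hsq : ‖(b - t • u) - z‖ ^ 2 = ‖b - z‖ ^ 2 + t * (t * ⟪u, u⟫ - 2 * ⟪u, b - z⟫) := by
    have h1 : (b - t • u) - z = (b - z) - t • u := by abel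
    rw [h1, norm_sub_sq_real, real_inner_smul_right, norm_smul, real_inner_comm]
    rw [mul_pow, Real.norm_eq_abs, sq_abs, ← real_inner_self_eq_norm_sq u]
    ring
  have hkey : t * ⟪u, u⟫ - 2 * ⟪u, b - z⟫ = 2 * (⟪u, z⟫ - c) := by
    rw [ht, div_mul_cancel₀ _ hne, inner_sub_right]; ring
  have hlt : ‖(b - t • u) - z‖ ^ 2 < ‖b - z‖ ^ 2 := by
    rw [hsq, hkey]
    nlinarith
  rw [dist_eq_norm, dist_eq_norm, happ]
  exact lt_of_pow_lt_pow_left₀ 2 (norm_nonneg _) hlt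

lemma reflAff_conj {u : Euc n} {c : ℝ} (hu : u ≠ 0) (w : Euc n) :
    (IsometryEquiv.addLeft w) * reflAff u c * (IsometryEquiv.addLeft w)⁻¹ =
      reflAff u (c + ⟪u, w⟫) := by
  apply IsometryEquiv.ext
  intro x
  have hinv : ((IsometryEquiv.addLeft w)⁻¹ : Isom n) x = -w + x := by
    show ((IsometryEquiv.addLeft w).symm : Isom n) x = -w + x
    rw [IsometryEquiv.addLeft_symm]
    rfl
  show (IsometryEquiv.addLeft w) (reflAff u c (((IsometryEquiv.addLeft w)⁻¹ : Isom n) x)) = _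
  rw [hinv, reflAff_apply _ _ _ hu, reflAff_apply _ _ _ hu]
  show w + _ = _
  rw [inner_add_right, inner_neg_right]
  module

section Poly

variable {ι : Type*} [Finite ι] (w : ι → Euc n) (b : ι → ℝ)

lemma inner_continuous (v : Euc n) : Continuous (fun x : Euc n => ⟪v, x⟫) :=
  continuous_const.inner continuous_id

lemma poly_isClosed : IsClosed {x : Euc n | ∀ i, ⟪w i, x⟫ ≤ b i} := by
  rw [Set.setOf_forall]
  exact isClosed_iInter fun i => isClosed_le (inner_continuous (w i)) continuous_const

lemma poly_convex : Convex ℝ {x : Euc n | ∀ i, ⟪w i, x⟫ ≤ b i} := by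
  rw [Set.setOf_forall]
  refine convex_iInter fun i => convex_halfSpace_le ?_ (b i)
  exact ⟨fun a b => inner_add_right _ _ _, fun r x => real_inner_smul_right _ _ _⟩

lemma poly_strict_open : IsOpen {x : Euc n | ∀ i, ⟪w i, x⟫ < b i} := by
  rw [Set.setOf_forall]
  exact isOpen_iInter_of_finite fun i => isOpen_lt (inner_continuous (w i)) continuous_const

lemma poly_strict_subset_interior :
    {x : Euc n | ∀ i, ⟪w i, x⟫ < b i} ⊆ interior {x : Euc n | ∀ i, ⟪w i, x⟫ ≤ b i} :=
  interior_maximal (fun x hx i => le_of_lt (hx i)) (poly_strict_open w b)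

lemma poly_interior_subset_strict (hw : ∀ i, w i ≠ 0) :
    interior {x : Euc n | ∀ i, ⟪w i, x⟫ ≤ b i} ⊆ {x : Euc n | ∀ i, ⟪w i, x⟫ < b i} := by
  intro x hx i
  obtain ⟨ε, hε, hball⟩ := Metric.isOpen_iff.mp isOpen_interior x hx
  have hle : ⟪w i, x⟫ ≤ b i := interior_subset hx i
  rcases lt_or_eq_of_le hle with h | h
  · exact h
  · exfalso
    have hwn : (0:ℝ) < ‖w i‖ := norm_pos_iff.mpr (hw i)
    set y := x + (ε / (2 * ‖w i‖)) • w i with hy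
    have hdist : dist y x < ε := by
      rw [hy, dist_eq_norm, add_sub_cancel_left, norm_smul, Real.norm_eq_abs,
        abs_of_pos (by positivity)]
      have heq : ε / (2 * ‖w i‖) * ‖w i‖ = ε / 2 := by
        field_simp
      rw [heq]
      linarith
    have hymem : y ∈ {x : Euc n | ∀ i, ⟪w i, x⟫ ≤ b i} :=
      interior_subset (hball (Metric.mem_ball.mpr hdist))
    have := hymem i
    rw [hy, inner_add_right, real_inner_smul_right, real_inner_self_eq_norm_sq] at this
    have hpos : 0 < ε / (2 * ‖w i‖) * ‖w i‖ ^ 2 := by positivity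
    rw [h] at this
    linarith

lemma poly_frontier (x : Euc n) (hx : x ∈ frontier {x : Euc n | ∀ i, ⟪w i, x⟫ ≤ b i}) :
    (∀ i, ⟪w i, x⟫ ≤ b i) ∧ ∃ i, ⟪w i, x⟫ = b i := by
  rw [frontier, (poly_isClosed w b).closure_eq] at hx
  obtain ⟨hmem, hni⟩ := hx
  refine ⟨hmem, ?_⟩
  by_contra hc
  push_neg at hc
  exact hni (poly_strict_subset_interior w b fun i => lt_of_le_of_ne (hmem i) (hc i))

end Poly

lemma closed_convex_eq_closure_interior {s : Set (Euc n)} (hclosed : IsClosed s)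
    (hconv : Convex ℝ s) (hne : (interior s).Nonempty) : s = closure (interior s) := by
  obtain ⟨y, hy⟩ := hne
  refine Set.Subset.antisymm ?_ ?_
  · intro x hx
    have hseq : Filter.Tendsto (fun m : ℕ => x + ((1:ℝ)/(m+1)) • (y - x)) Filter.atTop (nhds x) := by
      have h1 : Filter.Tendsto (fun m : ℕ => ((1:ℝ)/(m+1))) Filter.atTop (nhds 0) :=
        tendsto_one_div_add_atTop_nhds_zero_nat
      have h2 := (h1.smul_const (y - x)).const_add x
      simpa using h2
    refine mem_closure_of_tendsto hseq (Filter.Eventually.of_forall fun m => ?_)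
    refine hconv.add_smul_sub_mem_interior hx hy ⟨by positivity, ?_⟩
    rw [div_le_one (by positivity)]
    linarith [Nat.cast_nonneg (α := ℝ) m]
  · exact hclosed.closure_subset_iff.mpr interior_subset


section Geom

variable {G : Subgroup (Isom n)} {F : Set (Euc n)}

/-- distinct group elements give disjoint interior copies. -/
lemma disj_pair (hdisj : ∀ g ∈ G, g ≠ (1 : Isom n) → Disjoint (interior F) ((g : Isom n) '' interior F))
    {g h : Isom n} (hg : g ∈ G) (hh : h ∈ G) (hne : g ≠ h) :
    Disjoint (g '' interior F) (h '' interior F) := by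
  have h1 : g⁻¹ * h ∈ G := G.mul_mem (G.inv_mem hg) hh
  have h2 : g⁻¹ * h ≠ 1 := by
    intro hc
    apply hne
    have := congrArg (fun z => g * z) hc
    simpa [mul_assoc] using this.symm
  have hd := hdisj _ h1 h2
  have hd2 := (Set.disjoint_image_iff g.injective).mpr hd
  rw [← Set.image_comp] at hd2
  have : (⇑g ∘ ⇑(g⁻¹ * h)) = ⇑h := by
    funext z
    simp [IsometryEquiv.mul_apply]
  rwa [this] at hd2

/-- a point fixed by a nontrivial element of `G` lies in no copy of the open chamber. -/
lemma fixed_notmem (hdisj : ∀ g ∈ G, g ≠ (1 : Isom n) → Disjoint (interior F) ((g : Isom n) '' interior F))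
    {s g : Isom n} (hs : s ∈ G) (hsne : s ≠ 1) (hg : g ∈ G) {x : Euc n} (hx : s x = x) :
    x ∉ g '' interior F := by
  intro hmem
  have h1 : x ∈ (s * g) '' interior F := by
    rcases hmem with ⟨y, hy, rfl⟩
    exact ⟨y, hy, by rw [IsometryEquiv.mul_apply]; rw [hx]⟩
  have hne : s * g ≠ g := by
    intro hc
    exact hsne (mul_right_cancel (hc.trans (one_mul g).symm))
  exact Set.disjoint_left.mp (disj_pair hdisj (G.mul_mem hs hg) hg hne) h1 hmem

/-- The containment lemma: a copy of the chamber whose interior meets the interior of `Q`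
is contained in `Q`, provided the frontier of `Q` consists of fixed points. -/
lemma copy_subset (hdisj : ∀ g ∈ G, g ≠ (1 : Isom n) → Disjoint (interior F) ((g : Isom n) '' interior F))
    (hFconv : Convex ℝ F) (hFeq : F = closure (interior F))
    {Q : Set (Euc n)} (hQ : IsClosed Q)
    (hfr : ∀ x ∈ frontier Q, ∃ s ∈ G, s ≠ (1 : Isom n) ∧ s x = x)
    {g : Isom n} (hg : g ∈ G) (hmeet : ((g '' interior F) ∩ interior Q).Nonempty) :
    g '' F ⊆ Q := by
  have havoid : ∀ x ∈ g '' interior F, x ∉ frontier Q := by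
    intro x hx hfx
    obtain ⟨s, hs, hsne, hsx⟩ := hfr x hfx
    exact fixed_notmem hdisj hs hsne hg hsx hx
  have hcover : g '' interior F ⊆ interior Q ∪ Qᶜ := by
    intro x hx
    by_cases hmem : x ∈ Q
    · rcases (Set.mem_union _ _ _).mp (Set.mem_union_left _ hmem) with h | h
      · by_cases hi : x ∈ interior Q
        · exact Or.inl hi
        · exact absurd ⟨(subset_closure hmem), hi⟩ (havoid x hx)
      · exact Or.inl h
    · exact Or.inr hmem
  have hpre : IsPreconnected (g '' interior F) :=
    (hFconv.interior.isPreconnected).image _ (g.continuous.continuousOn)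
  have hsub : g '' interior F ⊆ interior Q := by
    refine hpre.subset_left_of_subset_union isOpen_interior hQ.isOpen_compl ?_ hcover ?_
    · exact Disjoint.mono_left interior_subset disjoint_compl_right
    · obtain ⟨x, hx1, hx2⟩ := hmeet
      exact ⟨x, hx1, hx2⟩
  calc g '' F = g '' closure (interior F) := by rw [← hFeq]
    _ ⊆ closure (g '' interior F) := image_closure_subset_closure_image g.continuous
    _ ⊆ closure (interior Q) := closure_mono hsub
    _ ⊆ Q := hQ.closure_subset_iff.mpr interior_subset

end Geom

section Meas
open MeasureTheory Pointwise

lemma isom_image_volume (g : Isom n) {s : Set (Euc n)} (hs : MeasurableSet s) :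
    volume (g '' s) = volume s := by
  have himg : g '' s = (g 0) +ᵥ ((g.toRealLinearIsometryEquiv : Euc n → Euc n) '' s) := by
    ext y
    simp only [Set.mem_image, Set.mem_vadd_set]
    constructor
    · rintro ⟨x, hx, rfl⟩
      refine ⟨(g.toRealLinearIsometryEquiv : Euc n → Euc n) x, ⟨x, hx, rfl⟩, ?_⟩
      rw [IsometryEquiv.toRealLinearIsometryEquiv_apply]
      simp [vadd_eq_add]
    · rintro ⟨z, ⟨x, hx, rfl⟩, rfl⟩
      refine ⟨x, hx, ?_⟩
      rw [IsometryEquiv.toRealLinearIsometryEquiv_apply]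
      simp [vadd_eq_add]
  rw [himg, measure_vadd]
  have h2 : (g.toRealLinearIsometryEquiv : Euc n → Euc n) '' s =
      (g.toRealLinearIsometryEquiv.symm : Euc n → Euc n) ⁻¹' s := by
    ext y
    simp only [Set.mem_image, Set.mem_preimage]
    constructor
    · rintro ⟨x, hx, rfl⟩
      simpa using hx
    · intro hy
      exact ⟨_, hy, by simp⟩
  rw [h2]
  exact g.toRealLinearIsometryEquiv.symm.measurePreserving.measure_preimage
    hs.nullMeasurableSet

/-- stabilizers of points are finite. -/
lemma stab_finite {G : Subgroup (Isom n)} {F : Set (Euc n)} (hFD : IsFundDom G F)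
    (hbd : Bornology.IsBounded F) (hne : (interior F).Nonempty) (x : Euc n) :
    Set.Finite {g : Isom n | g ∈ G ∧ g x = x} := by
  obtain ⟨r, hr⟩ := (Metric.isBounded_iff_subset_closedBall x).mp hbd
  set S := {g : Isom n | g ∈ G ∧ g x = x} with hS
  rw [← Set.finite_coe_iff]
  set As : S → Set (Euc n) := fun g => (g : Isom n) '' interior F with hAs
  have hub : ∀ g : S, As g ⊆ Metric.closedBall x r := by
    rintro ⟨g, hgG, hgx⟩ y hy
    rcases hy with ⟨z, hz, rfl⟩
    have hzb : dist z x ≤ r := Metric.mem_closedBall.mp (hr (interior_subset hz))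
    have : dist (g z) x = dist z x := by
      conv_lhs => rw [← hgx]
      exact g.isometry.dist_eq z x
    exact Metric.mem_closedBall.mpr (this ▸ hzb)
  have hdisjAs : Pairwise (Function.onFun Disjoint As) := by
    rintro ⟨g, hg⟩ ⟨h, hh⟩ hgh
    exact disj_pair hFD.2 hg.1 hh.1 (fun hc => hgh (Subtype.ext hc))
  have hopen : ∀ g : S, IsOpen (As g) := by
    rintro ⟨g, hg⟩
    exact g.toHomeomorph.isOpenMap _ isOpen_interior
  have hvol : ∀ g : S, volume (As g) = volume (interior F) := by
    rintro ⟨g, hg⟩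
    exact isom_image_volume g isOpen_interior.measurableSet
  have hεpos : 0 < volume (interior F) := isOpen_interior.measure_pos volume hne
  have hfin := MeasureTheory.Measure.finite_const_le_meas_of_disjoint_iUnion
    (volume : Measure (Euc n)) (ε := volume (interior F)) hεpos
    (fun g => (hopen g).measurableSet) hdisjAs ?_
  · have huniv : {i : S | volume (interior F) ≤ volume (As i)} = Set.univ := by
      ext g
      simp [hvol g]
    rw [huniv] at hfin
    exact Set.finite_univ_iff.mp hfin
  · refine ne_top_of_le_ne_top ?_ (measure_mono (Set.iUnion_subset hub))
    exact (MeasureTheory.measure_closedBall_lt_top).ne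
end Meas

lemma cover_by_refl {mP : ℕ} (uP : Fin mP → Euc n) (cP : Fin mP → ℝ) (huP : ∀ j, uP j ≠ 0)
    (W : Subgroup (Isom n)) (hWfin : Finite ↥W) (J : Set (Fin mP))
    (hgen : ∀ j ∈ J, reflAff (uP j) (cP j) ∈ W)
    {z : Euc n} (hz : ∀ j ∈ J, ⟪uP j, z⟫ < cP j) (x : Euc n) :
    ∃ w ∈ W, ∀ j ∈ J, ⟪uP j, (w : Isom n) x⟫ ≤ cP j := by
  obtain ⟨w₀, hmin⟩ := Finite.exists_min (fun w : ↥W => dist ((w : Isom n) x) z)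
  refine ⟨w₀, w₀.2, ?_⟩
  by_contra hc
  push_neg at hc
  obtain ⟨j, hjJ, hj⟩ := hc
  have hs : reflAff (uP j) (cP j) ∈ W := hgen j hjJ
  have hlt := reflAff_dist_lt (huP j) (hz j hjJ) hj
  have hmin2 := hmin ⟨reflAff (uP j) (cP j) * (w₀ : Isom n), W.mul_mem hs w₀.2⟩
  have heq : ((⟨reflAff (uP j) (cP j) * (w₀ : Isom n), W.mul_mem hs w₀.2⟩ : ↥W) : Isom n) x
      = reflAff (uP j) (cP j) ((w₀ : Isom n) x) := rfl
  rw [heq] at hmin2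
  exact absurd hmin2 (not_le.mpr hlt)


lemma mem_stabAt {G : Subgroup (Isom n)} {V : Euc n} {g : Isom n} :
    g ∈ stabAt G V ↔ g ∈ G ∧ g V = V := Iff.rfl

lemma nat_card_sigma {k : ℕ} (f : Fin k → Type*) [∀ i, Finite (f i)] :
    Nat.card (Σ i, f i) = ∑ i, Nat.card (f i) := by
  classical
  have inst : ∀ i, Fintype (f i) := fun i => Fintype.ofFinite _
  rw [Nat.card_eq_fintype_card, Fintype.card_sigma]
  exact Finset.sum_congr rfl fun i _ => (Nat.card_eq_fintype_card).symm

/-- let `F ⊆ P` be fundamental chambers of `G_F` and of a finite-index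
reflection subgroup `G_P ⊆ G_F`, with common special vertex `V`.  Let `V₁, …, V_k`
enumerate the points of the `G_F`-orbit of `V` lying in `P`, and let `G_{P(i)}` be the
group generated by the reflections in the facets of `P` containing `V_i`.  Then
`[G_F : G_P] = Σᵢ |G'_F| / |G_{P(i)}|`, where `G'_F = Stab(V, G_F)`; consequently
`[G'_F : G'_P]` divides `[G_F : G_P]`. -/
theorem stmt_17 (n mP : ℕ) (hn : 0 < n)
    (u : Fin (n + 1) → Euc n) (c : Fin (n + 1) → ℝ) (hu : ∀ i, u i ≠ 0)
    (hbd : Bornology.IsBounded (simplexSet u c))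
    (hint : (interior (simplexSet u c)).Nonempty)
    (hFD : IsFundDom (chamberGroup u c) (simplexSet u c))
    (uP : Fin mP → Euc n) (cP : Fin mP → ℝ) (huP : ∀ i, uP i ≠ 0)
    (hbdP : Bornology.IsBounded (simplexSet uP cP))
    (hintP : (interior (simplexSet uP cP)).Nonempty)
    (hPFD : IsFundDom (chamberGroup uP cP) (simplexSet uP cP))
    (hle : chamberGroup uP cP ≤ chamberGroup u c)
    (hFP : simplexSet u c ⊆ simplexSet uP cP)
    (hfin : (chamberGroup uP cP).relIndex (chamberGroup u c) ≠ 0)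
    (V : Euc n) (hVF : V ∈ simplexSet u c)
    (hVspecF : IsSpecialPt (chamberGroup u c) V)
    (hVspecP : IsSpecialPt (chamberGroup uP cP) V)
    (k : ℕ) (Vi : Fin k → Euc n) (hVinj : Function.Injective Vi)
    (hVi : ∀ x, (x ∈ simplexSet uP cP ∧
      ∃ g ∈ chamberGroup u c, (g : Isom n) V = x) ↔ ∃ i, Vi i = x) :
    (chamberGroup uP cP).relIndex (chamberGroup u c) =
      ∑ i : Fin k, Nat.card ↥(stabAt (chamberGroup u c) V) /
        Nat.card ↥(Subgroup.closure
          {g : Isom n | ∃ j, ⟪uP j, Vi i⟫ = cP j ∧ g = reflAff (uP j) (cP j)}) ∧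
    (stabAt (chamberGroup uP cP) V).relIndex (stabAt (chamberGroup u c) V) ∣
      (chamberGroup uP cP).relIndex (chamberGroup u c) := by
  classical
  obtain ⟨hFcov, hFdisj⟩ := hFD
  obtain ⟨hPcov, hPdisj⟩ := hPFD
  have hgenP : ∀ j, reflAff (uP j) (cP j) ∈ chamberGroup uP cP :=
    fun j => Subgroup.subset_closure ⟨j, rfl⟩
  have hFclosed : IsClosed (simplexSet u c) := poly_isClosed u c
  have hPclosed : IsClosed (simplexSet uP cP) := poly_isClosed uP cP
  have hFconv : Convex ℝ (simplexSet u c) := poly_convex u c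
  have hFeq : simplexSet u c = closure (interior (simplexSet u c)) :=
    closed_convex_eq_closure_interior hFclosed hFconv hint
  -- frontier points of P are fixed by nontrivial reflections of G_F
  have hfrP : ∀ x ∈ frontier (simplexSet uP cP),
      ∃ s ∈ chamberGroup u c, s ≠ (1 : Isom n) ∧ s x = x := by
    intro x hx
    obtain ⟨hmem, j, hj⟩ := poly_frontier uP cP x hx
    exact ⟨reflAff (uP j) (cP j), hle (hgenP j), reflAff_ne_one _ (huP j),
      reflAff_fix (huP j) hj⟩
  -- copies meeting the interior of P are inside P
  have hK2P : ∀ g ∈ chamberGroup u c,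
      ((g '' interior (simplexSet u c)) ∩ interior (simplexSet uP cP)).Nonempty →
      g '' simplexSet u c ⊆ simplexSet uP cP :=
    fun g hg hmeet => copy_subset hFdisj hFconv hFeq hPclosed hfrP hg hmeet
  -- the set of copies of F inside P
  set Ctot : Set (Isom n) :=
    {g | g ∈ chamberGroup u c ∧ g '' simplexSet u c ⊆ simplexSet uP cP} with hCtotdef
  -- the index equals the number of copies of F inside P
  have himgint : ∀ (g : Isom n) (s : Set (Euc n)), g '' interior s = interior (g '' s) := by
    intro g s
    simpa using g.toHomeomorph.image_interior s
  have hrelindex : (chamberGroup uP cP).relIndex (chamberGroup u c) = Nat.card ↥Ctot := by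
    have hq : (chamberGroup uP cP).relIndex (chamberGroup u c) =
        Nat.card (↥(chamberGroup u c) ⧸
          ((chamberGroup uP cP).subgroupOf (chamberGroup u c))) :=
      Subgroup.index_eq_card _
    rw [hq]
    refine (Nat.card_congr (Equiv.ofBijective ?_ ?_)).symm
    · exact fun g => QuotientGroup.mk (⟨(g : Isom n), g.2.1⟩ : ↥(chamberGroup u c))⁻¹
    constructor
    · rintro g h heq
      rw [QuotientGroup.eq] at heq
      rw [Subgroup.mem_subgroupOf] at heq
      have hp : (g : Isom n) * (h : Isom n)⁻¹ ∈ chamberGroup uP cP := by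
        simpa using heq
      by_cases hp1 : (g : Isom n) * (h : Isom n)⁻¹ = 1
      · exact Subtype.ext (by
          have := mul_inv_eq_one.mp hp1
          exact this)
      · exfalso
        have hgsub : (g : Isom n) '' interior (simplexSet u c) ⊆
            interior (simplexSet uP cP) := by
          rw [himgint]
          exact interior_mono g.2.2
        have hhsub : (h : Isom n) '' interior (simplexSet u c) ⊆
            interior (simplexSet uP cP) := by
          rw [himgint]
          exact interior_mono h.2.2
        have hcomp : (g : Isom n) '' interior (simplexSet u c) =
            ((g : Isom n) * (h : Isom n)⁻¹) '' ((h : Isom n) '' interior (simplexSet u c)) := by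
          rw [← Set.image_comp]
          congr 1
          funext z
          simp [IsometryEquiv.mul_apply]
        obtain ⟨x0, hx0⟩ := hint
        have hx1 : (g : Isom n) x0 ∈ (g : Isom n) '' interior (simplexSet u c) :=
          ⟨x0, hx0, rfl⟩
        have hx2 : (g : Isom n) x0 ∈ interior (simplexSet uP cP) := hgsub hx1
        have hx3 : (g : Isom n) x0 ∈ ((g : Isom n) * (h : Isom n)⁻¹) ''
            interior (simplexSet uP cP) := by
          rw [hcomp] at hx1
          exact (Set.image_mono hhsub) hx1
        exact Set.disjoint_left.mp (hPdisj _ hp hp1) hx2 hx3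
    · intro q
      obtain ⟨a, rfl⟩ := QuotientGroup.mk_surjective q
      obtain ⟨x0, hx0⟩ := hint
      obtain ⟨q0, hq0, y, hyP, hyx⟩ := hPcov ((a : Isom n)⁻¹ x0)
      have hyint : y ∈ interior (simplexSet uP cP) := by
        by_contra hyi
        have hyfr : y ∈ frontier (simplexSet uP cP) := by
          rw [frontier, hPclosed.closure_eq]
          exact ⟨hyP, hyi⟩
        obtain ⟨s, hsGF, hsne, hsy⟩ := hfrP y hyfr
        have hfix : (q0 * s * q0⁻¹) ((a : Isom n)⁻¹ x0) = (a : Isom n)⁻¹ x0 := by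
          have hq0inv : (q0⁻¹ : Isom n) ((a : Isom n)⁻¹ x0) = y := by
            rw [← hyx]
            exact q0.symm_apply_apply y
          rw [IsometryEquiv.mul_apply, IsometryEquiv.mul_apply, hq0inv, hsy, hyx]
        have hne1 : q0 * s * q0⁻¹ ≠ 1 := by
          intro hc
          apply hsne
          have h5 : s = (q0⁻¹ * (q0 * s * q0⁻¹)) * q0 := by group
          rw [hc] at h5
          simpa using h5
        refine fixed_notmem hFdisj
          ((chamberGroup u c).mul_mem ((chamberGroup u c).mul_mem (hle hq0) hsGF)
            ((chamberGroup u c).inv_mem (hle hq0)))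
          hne1 ((chamberGroup u c).inv_mem a.2) hfix ⟨x0, hx0, rfl⟩
      have hq0x : (q0⁻¹ : Isom n) ((a : Isom n)⁻¹ x0) = y := by
        rw [← hyx]
        exact q0.symm_apply_apply y
      have hmem2 : q0⁻¹ * (a : Isom n)⁻¹ ∈ chamberGroup u c :=
        (chamberGroup u c).mul_mem ((chamberGroup u c).inv_mem (hle hq0))
          ((chamberGroup u c).inv_mem a.2)
      have hmeet : ((q0⁻¹ * (a : Isom n)⁻¹) '' interior (simplexSet u c) ∩
          interior (simplexSet uP cP)).Nonempty := by
        refine ⟨y, ⟨x0, hx0, ?_⟩, hyint⟩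
        rw [IsometryEquiv.mul_apply, hq0x]
      have hsubP := hK2P _ hmem2 hmeet
      refine ⟨⟨q0⁻¹ * (a : Isom n)⁻¹, hmem2, hsubP⟩, ?_⟩
      rw [QuotientGroup.eq]
      rw [Subgroup.mem_subgroupOf]
      show ((⟨q0⁻¹ * (a : Isom n)⁻¹, hmem2⟩ : ↥(chamberGroup u c))⁻¹⁻¹ *
        a : ↥(chamberGroup u c)).1 ∈ chamberGroup uP cP
      have : ((⟨q0⁻¹ * (a : Isom n)⁻¹, hmem2⟩ : ↥(chamberGroup u c))⁻¹⁻¹ *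
          a : ↥(chamberGroup u c)).1 = q0⁻¹ := by
        simp [mul_assoc]
      rw [this]
      exact (chamberGroup uP cP).inv_mem hq0
  -- copies grouped by the orbit point they contain
  set Ci : Fin k → Set (Isom n) := fun i =>
    {g | g ∈ chamberGroup u c ∧ g V = Vi i ∧ g '' simplexSet u c ⊆ simplexSet uP cP}
    with hCidef
  have hCfin : Finite ↥Ctot := by
    apply Nat.finite_of_card_ne_zero
    rw [← hrelindex]
    exact hfin
  have hCifin : ∀ i, Finite ↥(Ci i) := by
    intro i
    have hsub : Ci i ⊆ Ctot := fun g hg => ⟨hg.1, hg.2.2⟩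
    exact Set.finite_coe_iff.mpr (Set.Finite.subset (Set.finite_coe_iff.mp hCfin) hsub)
  have hCsum : Nat.card ↥Ctot = ∑ i, Nat.card ↥(Ci i) := by
    have hb : Function.Bijective (fun p : (Σ i : Fin k, ↥(Ci i)) =>
        (⟨p.2.1, p.2.2.1, p.2.2.2.2⟩ : ↥Ctot)) := by
      constructor
      · rintro ⟨i, g, hg⟩ ⟨i', g', hg'⟩ h
        have hval : g = g' := congrArg Subtype.val h
        subst hval
        have hii : i = i' := hVinj (hg.2.1.symm.trans hg'.2.1)
        subst hii
        rfl
      · rintro ⟨g, hgGF, hgsub⟩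
        have hgVP : g V ∈ simplexSet uP cP := hgsub ⟨V, hVF, rfl⟩
        obtain ⟨i, hi⟩ := (hVi (g V)).mp ⟨hgVP, g, hgGF, rfl⟩
        exact ⟨⟨i, ⟨g, hgGF, hi.symm, hgsub⟩⟩, rfl⟩
    rw [← Nat.card_congr (Equiv.ofBijective _ hb)]
    exact @nat_card_sigma k (fun i => ↥(Ci i)) hCifin
  -- the per-orbit-point counting
  have hmain : ∀ i : Fin k,
      Nat.card ↥(stabAt (chamberGroup u c) V) = Nat.card ↥(Ci i) *
        Nat.card ↥(Subgroup.closure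
          {g : Isom n | ∃ j, ⟪uP j, Vi i⟫ = cP j ∧ g = reflAff (uP j) (cP j)}) ∧
      Nat.card ↥(Subgroup.closure
          {g : Isom n | ∃ j, ⟪uP j, Vi i⟫ = cP j ∧ g = reflAff (uP j) (cP j)}) ∣
        Nat.card ↥(stabAt (chamberGroup uP cP) V) ∧
      Nat.card ↥(Subgroup.closure
          {g : Isom n | ∃ j, ⟪uP j, Vi i⟫ = cP j ∧ g = reflAff (uP j) (cP j)}) ≠ 0 := by
    intro i
    obtain ⟨hViP, gi, hgiGF, hgiV⟩ := (hVi (Vi i)).mpr ⟨i, rfl⟩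
    set Wset : Set (Isom n) :=
      {g : Isom n | ∃ j, ⟪uP j, Vi i⟫ = cP j ∧ g = reflAff (uP j) (cP j)} with hWsetdef
    have hWgenGP : Wset ⊆ (chamberGroup uP cP : Set (Isom n)) := by
      rintro g ⟨j, hj, rfl⟩
      exact hgenP j
    have hWleGP : Subgroup.closure Wset ≤ chamberGroup uP cP :=
      (Subgroup.closure_le _).mpr hWgenGP
    have hWleStab : Subgroup.closure Wset ≤ stabAt (chamberGroup u c) (Vi i) := by
      refine (Subgroup.closure_le _).mpr ?_
      rintro g ⟨j, hj, rfl⟩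
      exact ⟨hle (hgenP j), reflAff_fix (huP j) hj⟩
    have hstabfinVi : Set.Finite {g : Isom n | g ∈ chamberGroup u c ∧ g (Vi i) = Vi i} :=
      stab_finite ⟨hFcov, hFdisj⟩ hbd hint (Vi i)
    have hWfin : Finite ↥(Subgroup.closure Wset) := by
      refine Set.finite_coe_iff.mpr (Set.Finite.subset hstabfinVi ?_)
      intro g hg
      exact hWleStab hg
    have hWne : Nonempty ↥(Subgroup.closure Wset) := ⟨1, Subgroup.one_mem _⟩
    have hWcard0 : Nat.card ↥(Subgroup.closure Wset) ≠ 0 := Nat.card_pos.ne'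
    obtain ⟨z, hz⟩ := hintP
    have hzstrict : ∀ j, ⟪uP j, z⟫ < cP j := poly_interior_subset_strict uP cP huP hz
    set Ai : Set (Isom n) := {g | g ∈ chamberGroup u c ∧ g V = Vi i} with hAidef
    -- the product decomposition
    set f3 : ↥(Ci i) × ↥(Subgroup.closure Wset) → ↥Ai := fun p =>
      ⟨(p.2 : Isom n) * (p.1 : Isom n),
        (chamberGroup u c).mul_mem (hle (hWleGP p.2.2)) p.1.2.1,
        by rw [IsometryEquiv.mul_apply, p.1.2.2.1, (hWleStab p.2.2).2]⟩ with hf3def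
    have hinj3 : Function.Injective f3 := by
      rintro ⟨⟨g1, hg1⟩, ⟨w1, hw1⟩⟩ ⟨⟨g2, hg2⟩, ⟨w2, hw2⟩⟩ h
      have hval : w1 * g1 = w2 * g2 := congrArg Subtype.val h
      have hwmem : w2⁻¹ * w1 ∈ chamberGroup uP cP :=
        (chamberGroup uP cP).mul_mem ((chamberGroup uP cP).inv_mem (hWleGP hw2)) (hWleGP hw1)
      by_cases hww : w2⁻¹ * w1 = 1
      · have hw12 : w2 = w1 := inv_mul_eq_one.mp hww
        subst hw12
        have hg12 : g1 = g2 := mul_left_cancel hval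
        subst hg12
        rfl
      · exfalso
        have hcomp : g2 = (w2⁻¹ * w1) * g1 := by
          rw [mul_assoc, hval]
          rw [← mul_assoc]
          simp
        have hg1sub : g1 '' interior (simplexSet u c) ⊆ interior (simplexSet uP cP) := by
          rw [himgint]
          exact interior_mono hg1.2.2
        have hg2sub : g2 '' interior (simplexSet u c) ⊆ interior (simplexSet uP cP) := by
          rw [himgint]
          exact interior_mono hg2.2.2
        obtain ⟨x0, hx0⟩ := hint
        have hx1 : g2 x0 ∈ interior (simplexSet uP cP) := hg2sub ⟨x0, hx0, rfl⟩
        have hx2 : g2 x0 ∈ (w2⁻¹ * w1) '' interior (simplexSet uP cP) := by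
          refine ⟨g1 x0, hg1sub ⟨x0, hx0, rfl⟩, ?_⟩
          rw [hcomp]
          rfl
        exact Set.disjoint_left.mp (hPdisj _ hwmem hww) hx1 hx2
    have hsurj3 : Function.Surjective f3 := by
      rintro ⟨g', hg'GF, hg'V⟩
      obtain ⟨x0, hx0⟩ := hint
      obtain ⟨ω, hωW, hωle⟩ := cover_by_refl uP cP huP (Subgroup.closure Wset) hWfin
        {j | ⟪uP j, Vi i⟫ = cP j} (fun j hj => Subgroup.subset_closure ⟨j, hj, rfl⟩)
        (fun j _ => hzstrict j) (g' x0)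
      have hg2GF : ω * g' ∈ chamberGroup u c :=
        (chamberGroup u c).mul_mem (hle (hWleGP hωW)) hg'GF
      have hg2V : (ω * g') V = Vi i := by
        rw [IsometryEquiv.mul_apply, hg'V, (hWleStab hωW).2]
      have havoid : ∀ y ∈ (ω * g') '' interior (simplexSet u c), ∀ j, ⟪uP j, y⟫ ≠ cP j := by
        intro y hy j heq
        exact fixed_notmem hFdisj (hle (hgenP j)) (reflAff_ne_one _ (huP j)) hg2GF
          (reflAff_fix (huP j) heq) hy
      have hg2x0 : (ω * g') x0 ∈ (ω * g') '' interior (simplexSet u c) := ⟨x0, hx0, rfl⟩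
      have hQclosed : IsClosed {x : Euc n |
          ∀ jj : {j : Fin mP // ⟪uP j, Vi i⟫ = cP j}, ⟪uP jj.1, x⟫ ≤ cP jj.1} :=
        poly_isClosed (fun jj : {j : Fin mP // ⟪uP j, Vi i⟫ = cP j} => uP jj.1)
          (fun jj => cP jj.1)
      have hfrQ : ∀ x ∈ frontier {x : Euc n |
          ∀ jj : {j : Fin mP // ⟪uP j, Vi i⟫ = cP j}, ⟪uP jj.1, x⟫ ≤ cP jj.1},
          ∃ s ∈ chamberGroup u c, s ≠ (1 : Isom n) ∧ s x = x := by
        intro x hx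
        obtain ⟨hmem, jj, hj⟩ := poly_frontier
          (fun jj : {j : Fin mP // ⟪uP j, Vi i⟫ = cP j} => uP jj.1) (fun jj => cP jj.1) x hx
        exact ⟨reflAff (uP jj.1) (cP jj.1), hle (hgenP jj.1),
          reflAff_ne_one _ (huP jj.1), reflAff_fix (huP jj.1) hj⟩
      have hmeetQ : ((ω * g') '' interior (simplexSet u c) ∩ interior {x : Euc n |
          ∀ jj : {j : Fin mP // ⟪uP j, Vi i⟫ = cP j}, ⟪uP jj.1, x⟫ ≤ cP jj.1}).Nonempty := by
        refine ⟨(ω * g') x0, hg2x0, ?_⟩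
        refine poly_strict_subset_interior _ _ ?_
        intro jj
        exact lt_of_le_of_ne (hωle jj.1 jj.2) (havoid _ hg2x0 jj.1)
      have hsubQ := copy_subset hFdisj hFconv hFeq hQclosed hfrQ hg2GF hmeetQ
      have hViQ : Vi i ∈ closure ((ω * g') '' interior (simplexSet u c)) := by
        have h1 : Vi i ∈ (ω * g') '' simplexSet u c := ⟨V, hVF, hg2V⟩
        have h2 : (ω * g') '' simplexSet u c =
            closure ((ω * g') '' interior (simplexSet u c)) := by
          conv_lhs => rw [hFeq]
          simpa using (ω * g').toHomeomorph.image_closure (interior (simplexSet u c))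
        rwa [h2] at h1
      have hUopen : IsOpen {y : Euc n |
          ∀ jj : {j : Fin mP // ⟪uP j, Vi i⟫ ≠ cP j}, ⟪uP jj.1, y⟫ < cP jj.1} :=
        poly_strict_open (fun jj : {j : Fin mP // ⟪uP j, Vi i⟫ ≠ cP j} => uP jj.1)
          (fun jj => cP jj.1)
      have hViU : Vi i ∈ {y : Euc n |
          ∀ jj : {j : Fin mP // ⟪uP j, Vi i⟫ ≠ cP j}, ⟪uP jj.1, y⟫ < cP jj.1} :=
        fun jj => lt_of_le_of_ne (hViP jj.1) jj.2
      obtain ⟨y, hyU, hyg2⟩ := _root_.mem_closure_iff.mp hViQ _ hUopen hViU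
      have hystrict : ∀ j, ⟪uP j, y⟫ < cP j := by
        intro j
        by_cases hj : ⟪uP j, Vi i⟫ = cP j
        · refine lt_of_le_of_ne ?_ (havoid y hyg2 j)
          exact hsubQ ((Set.image_mono interior_subset) hyg2) ⟨j, hj⟩
        · exact hyU ⟨j, hj⟩
      have hmeetP : ((ω * g') '' interior (simplexSet u c) ∩
          interior (simplexSet uP cP)).Nonempty :=
        ⟨y, hyg2, poly_strict_subset_interior uP cP hystrict⟩
      have hsubP := hK2P _ hg2GF hmeetP
      refine ⟨⟨⟨ω * g', hg2GF, hg2V, hsubP⟩, ⟨ω⁻¹, Subgroup.inv_mem _ hωW⟩⟩, ?_⟩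
      apply Subtype.ext
      show ω⁻¹ * (ω * g') = g'
      rw [inv_mul_cancel_left]
    have hAicard : Nat.card ↥Ai =
        Nat.card ↥(Ci i) * Nat.card ↥(Subgroup.closure Wset) := by
      rw [← Nat.card_congr (Equiv.ofBijective f3 ⟨hinj3, hsurj3⟩), Nat.card_prod]
    have hstabA : Nat.card ↥(stabAt (chamberGroup u c) V) = Nat.card ↥Ai := by
      refine Nat.card_congr (Equiv.ofBijective (fun h => ⟨gi * (h : Isom n),
        (chamberGroup u c).mul_mem hgiGF h.2.1,
        by rw [IsometryEquiv.mul_apply, h.2.2, hgiV]⟩ :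
          ↥(stabAt (chamberGroup u c) V) → ↥Ai) ⟨?_, ?_⟩)
      · rintro ⟨h1, hh1⟩ ⟨h2, hh2⟩ heq
        have hval : gi * h1 = gi * h2 := congrArg Subtype.val heq
        exact Subtype.ext (mul_left_cancel hval)
      · rintro ⟨g, hgGF, hgV⟩
        refine ⟨⟨gi⁻¹ * g, ⟨(chamberGroup u c).mul_mem ((chamberGroup u c).inv_mem hgiGF) hgGF,
          ?_⟩⟩, ?_⟩
        · rw [IsometryEquiv.mul_apply, hgV, ← hgiV]
          exact gi.inv_apply_self V
        · apply Subtype.ext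
          show gi * (gi⁻¹ * g) = g
          rw [mul_inv_cancel_left]
    refine ⟨by rw [hstabA, hAicard], ?_, hWcard0⟩
    -- divisibility via conjugation by the translation
    have hconjle : Subgroup.map
        (MulAut.conj (IsometryEquiv.addLeft (V - Vi i))).toMonoidHom
        (Subgroup.closure Wset) ≤ stabAt (chamberGroup uP cP) V := by
      rw [MonoidHom.map_closure]
      refine (Subgroup.closure_le _).mpr ?_
      rintro g ⟨g0, ⟨j, hj, rfl⟩, rfl⟩
      have hc : (MulAut.conj (IsometryEquiv.addLeft (V - Vi i))).toMonoidHom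
          (reflAff (uP j) (cP j)) = reflAff (uP j) ⟪uP j, V⟫ := by
        show IsometryEquiv.addLeft (V - Vi i) * reflAff (uP j) (cP j) *
          (IsometryEquiv.addLeft (V - Vi i))⁻¹ = _
        rw [reflAff_conj (huP j)]
        congr 1
        rw [inner_sub_right]
        rw [← hj]
        ring
      rw [hc]
      exact ⟨hVspecP (uP j) (cP j) (huP j) (hgenP j), reflAff_fix (huP j) rfl⟩
    have hcardmap : Nat.card ↥(Subgroup.closure Wset) = Nat.card ↥(Subgroup.map
        (MulAut.conj (IsometryEquiv.addLeft (V - Vi i))).toMonoidHom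
        (Subgroup.closure Wset)) :=
      Nat.card_congr (Subgroup.equivMapOfInjective _ _
        (MulAut.conj (IsometryEquiv.addLeft (V - Vi i))).injective).toEquiv
    rw [hcardmap]
    exact Subgroup.card_dvd_of_le hconjle
  have hstabfinGF : Finite ↥(stabAt (chamberGroup u c) V) := by
    have := stab_finite ⟨hFcov, hFdisj⟩ hbd hint V
    exact Set.finite_coe_iff.mpr this
  -- part 1
  have hpart1 : (chamberGroup uP cP).relIndex (chamberGroup u c) =
      ∑ i : Fin k, Nat.card ↥(stabAt (chamberGroup u c) V) /
        Nat.card ↥(Subgroup.closure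
          {g : Isom n | ∃ j, ⟪uP j, Vi i⟫ = cP j ∧ g = reflAff (uP j) (cP j)}) := by
    rw [hrelindex, hCsum]
    refine Finset.sum_congr rfl fun i _ => ?_
    obtain ⟨hcard, _, hne0⟩ := hmain i
    rw [hcard]
    exact (Nat.mul_div_cancel _ (Nat.pos_of_ne_zero hne0)).symm
  refine ⟨hpart1, ?_⟩
  -- part 2 : divisibility
  have hstable : stabAt (chamberGroup uP cP) V ≤ stabAt (chamberGroup u c) V :=
    fun g hg => ⟨hle hg.1, hg.2⟩
  have hindexeq : (stabAt (chamberGroup uP cP) V).relIndex (stabAt (chamberGroup u c) V) *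
      Nat.card ↥(stabAt (chamberGroup uP cP) V) =
      Nat.card ↥(stabAt (chamberGroup u c) V) := by
    have h1 := Subgroup.index_mul_card
      ((stabAt (chamberGroup uP cP) V).subgroupOf (stabAt (chamberGroup u c) V))
    have h2 : Nat.card ↥((stabAt (chamberGroup uP cP) V).subgroupOf
        (stabAt (chamberGroup u c) V)) = Nat.card ↥(stabAt (chamberGroup uP cP) V) :=
      Nat.card_congr (Subgroup.subgroupOfEquivOfLe hstable).toEquiv
    rw [h2] at h1
    exact h1
  rw [hpart1]
  refine Finset.dvd_sum fun i _ => ?_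
  obtain ⟨hcard, hdvd, hne0⟩ := hmain i
  obtain ⟨m, hm⟩ := hdvd
  refine ⟨m, ?_⟩
  rw [hcard]
  rw [Nat.mul_div_cancel _ (Nat.pos_of_ne_zero hne0)]
  -- Nat.card (Ci i) = relindex' * m
  have hwpos : 0 < Nat.card ↥(Subgroup.closure
      {g : Isom n | ∃ j, ⟪uP j, Vi i⟫ = cP j ∧ g = reflAff (uP j) (cP j)}) :=
    Nat.pos_of_ne_zero hne0
  have ha : Nat.card ↥(Ci i) * Nat.card ↥(Subgroup.closure
      {g : Isom n | ∃ j, ⟪uP j, Vi i⟫ = cP j ∧ g = reflAff (uP j) (cP j)}) =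
      ((stabAt (chamberGroup uP cP) V).relIndex (stabAt (chamberGroup u c) V) * m) *
      Nat.card ↥(Subgroup.closure
      {g : Isom n | ∃ j, ⟪uP j, Vi i⟫ = cP j ∧ g = reflAff (uP j) (cP j)}) := by
    rw [← hcard, ← hindexeq, hm]
    ring
  exact Nat.eq_of_mul_eq_mul_right hwpos ha
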